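/- The maximum of u_p converges to 1 as p → +∞, i.e. lim_{p→+∞} ‖u_p‖_∞ = 1. -/
import Mathlib


open Real Set Filter Topology

noncomputable section

/-- `u` is the (unique) positive solution of the one-dimensional Lane–Emden problem
`-u'' = u^p` on `(-1,1)` with `u(-1) = u(1) = 0`; it is even, positive on `(-1,1)`,
decreasing on `[0,1]`, and its sup norm is attained at `0`. -/
def IsLaneEmden (p : ℝ) (u : ℝ → ℝ) : Prop :=
  ContDiff ℝ 2 u ∧
  (∀ t ∈ Ioo (-1 : ℝ) 1, deriv (deriv u) t = -(u t ^ p)) ∧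
  u (-1) = 0 ∧ u 1 = 0 ∧
  (∀ t ∈ Ioo (-1 : ℝ) 1, 0 < u t) ∧
  (∀ t : ℝ, u (-t) = u t) ∧
  (∀ ⦃s t : ℝ⦄, s ∈ Icc (0 : ℝ) 1 → t ∈ Icc (0 : ℝ) 1 → s ≤ t → u t ≤ u s) ∧
  (∀ t ∈ Icc (-1 : ℝ) 1, u t ≤ u 0)

lemma laneEmden_key (p : ℝ) (hp : 1 < p) (f : ℝ → ℝ) (h : IsLaneEmden p f) :
    0 < f 0 ∧ 2 ≤ f 0 ^ (p - 1) ∧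
      ∀ δ : ℝ, 0 < δ → δ < 1 → f 0 ^ (p - 1) * (1 - δ) ^ p ≤ 2 / δ ^ 2 := by
  obtain ⟨hC, hode, hm1, h1, hpos, heven, hmono, hmax⟩ := h
  set M := f 0 with hMdef
  have hp0 : (0:ℝ) < p := lt_trans one_pos hp
  have hM0 : 0 < M := hpos 0 (by norm_num)
  -- differentiability facts
  have hC2 : ContDiff ℝ ((1:ℕ) + 1) f := by exact_mod_cast hC
  have hd1 : Differentiable ℝ f := hC.differentiable (by norm_num)
  have hc1d : ContDiff ℝ (1:ℕ) (deriv f) := (contDiff_succ_iff_deriv.mp hC2).2.2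
  have hd2 : Differentiable ℝ (deriv f) := hc1d.differentiable (by norm_num)
  have hcdd : Continuous (deriv (deriv f)) := hc1d.continuous_deriv (by norm_num)
  -- the ODE holds on the closed interval, by continuity
  have hgc : Continuous fun s => -(f s ^ p) :=
    (hd1.continuous.rpow_const fun x => Or.inr hp0.le).neg
  have heqI : ∀ s ∈ Icc (-1:ℝ) 1, deriv (deriv f) s = -(f s ^ p) := by
    have := (Set.EqOn.closure (fun s hs => hode s hs) hcdd hgc)
    rwa [closure_Ioo (by norm_num : (-1:ℝ) ≠ 1)] at this
  -- deriv f 0 = 0 by evenness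
  have hderiv0 : deriv f 0 = 0 := by
    have he : (fun t => f (-t)) = f := funext heven
    have h2 := deriv_comp_neg (f := f) (x := (0:ℝ))
    rw [he, neg_zero] at h2
    linarith
  -- nonnegativity on [0,1]
  have hnn : ∀ s ∈ Icc (0:ℝ) 1, 0 ≤ f s := by
    intro s hs
    rcases eq_or_lt_of_le hs.2 with h | h
    · rw [h, h1]
    · exact (hpos s ⟨by linarith [hs.1], h⟩).le
  -- FTC for deriv f
  have hA : ∀ t : ℝ, deriv f t = ∫ s in (0:ℝ)..t, deriv (deriv f) s := by
    intro t
    rw [intervalIntegral.integral_deriv_eq_sub (fun x _ => hd2 x)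
      (hcdd.intervalIntegrable 0 t), hderiv0, sub_zero]
  -- FTC for f
  have hB : ∀ t : ℝ, f t - M = ∫ s in (0:ℝ)..t, deriv f s := by
    intro t
    rw [intervalIntegral.integral_deriv_eq_sub (fun x _ => hd1 x)
      (hd2.continuous.intervalIntegrable 0 t)]
  -- concavity on [0,1]
  have hconc : ConcaveOn ℝ (Icc (0:ℝ) 1) f := by
    apply concaveOn_of_deriv2_nonpos (convex_Icc 0 1) hd1.continuous.continuousOn
      hd1.differentiableOn hd2.differentiableOn
    intro x hx
    rw [interior_Icc] at hx
    have hx' : x ∈ Icc (-1:ℝ) 1 := ⟨by linarith [hx.1], hx.2.le⟩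
    show deriv^[2] f x ≤ 0
    have : deriv^[2] f x = deriv (deriv f) x := by
      simp [Function.iterate_succ, Function.iterate_zero, Function.comp]
    rw [this, heqI x hx', neg_nonpos]
    exact rpow_nonneg (hnn x ⟨by linarith [hx.1], hx.2.le⟩) p
  have hcon : ∀ s ∈ Icc (0:ℝ) 1, M * (1 - s) ≤ f s := by
    intro s hs
    have := hconc.2 (x := 0) (y := 1) (by norm_num) (by norm_num)
      (by linarith [hs.2] : (0:ℝ) ≤ 1 - s) hs.1 (by ring)
    simp only [smul_eq_mul, mul_zero, mul_one, zero_add, h1] at this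
    calc M * (1 - s) = (1 - s) * f 0 + 0 := by rw [← hMdef]; ring
    _ ≤ f s := this
  constructor
  · exact hM0
  constructor
  · -- lower bound: 2 ≤ M ^ (p - 1)
    have hbnd : ∀ t ∈ Icc (0:ℝ) 1, -(M ^ p) * t ≤ deriv f t := by
      intro t ht
      rw [hA t]
      have : ∫ s in (0:ℝ)..t, -(M ^ p) ≤ ∫ s in (0:ℝ)..t, deriv (deriv f) s := by
        apply intervalIntegral.integral_mono_on ht.1
          (intervalIntegrable_const) (hcdd.intervalIntegrable 0 t)
        intro s hs
        have hs' : s ∈ Icc (0:ℝ) 1 := ⟨hs.1, le_trans hs.2 ht.2⟩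
        rw [heqI s ⟨by linarith [hs'.1], hs'.2⟩]
        exact neg_le_neg (rpow_le_rpow (hnn s hs')
          (hmax s ⟨by linarith [hs'.1], hs'.2⟩) hp0.le)
      simpa [mul_comm] using this
    have hint : f 1 - M ≥ ∫ s in (0:ℝ)..1, -(M ^ p) * s := by
      rw [hB 1]
      apply intervalIntegral.integral_mono_on (by norm_num)
        (by apply Continuous.intervalIntegrable; continuity)
        (hd2.continuous.intervalIntegrable 0 1)
      intro s hs
      exact hbnd s hs
    have hval : (∫ s in (0:ℝ)..1, -(M ^ p) * s) = -(M ^ p) / 2 := by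
      rw [intervalIntegral.integral_const_mul, integral_id]
      ring
    rw [h1, hval] at hint
    -- 0 - M ≥ -(M^p)/2, so 2*M ≤ M^p
    have h2M : 2 * M ≤ M ^ p := by linarith
    rw [show p - 1 = p - 1 from rfl, rpow_sub hM0, rpow_one, le_div_iff₀ hM0]
    linarith
  · -- upper bound
    intro δ hδ0 hδ1
    set m := M * (1 - δ) with hmdef
    have hm0 : 0 < m := mul_pos hM0 (by linarith)
    have hbnd : ∀ t ∈ Icc (0:ℝ) δ, deriv f t ≤ -(m ^ p) * t := by
      intro t ht
      rw [hA t]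
      have : ∫ s in (0:ℝ)..t, deriv (deriv f) s ≤ ∫ s in (0:ℝ)..t, -(m ^ p) := by
        apply intervalIntegral.integral_mono_on ht.1
          (hcdd.intervalIntegrable 0 t) (intervalIntegrable_const)
        intro s hs
        have hs1 : s ∈ Icc (0:ℝ) 1 := ⟨hs.1, by linarith [hs.2, ht.2]⟩
        rw [heqI s ⟨by linarith [hs1.1], hs1.2⟩]
        apply neg_le_neg
        apply rpow_le_rpow hm0.le _ hp0.le
        calc m = M * (1 - δ) := rfl
        _ ≤ M * (1 - s) := by nlinarith [hs.2, ht.2, hM0]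
        _ ≤ f s := hcon s hs1
      simpa [mul_comm] using this
    have hint : f δ - M ≤ ∫ s in (0:ℝ)..δ, -(m ^ p) * s := by
      rw [hB δ]
      apply intervalIntegral.integral_mono_on hδ0.le
        (hd2.continuous.intervalIntegrable 0 δ)
        (by apply Continuous.intervalIntegrable; continuity)
      intro s hs
      exact hbnd s hs
    have hval : (∫ s in (0:ℝ)..δ, -(m ^ p) * s) = -(m ^ p) * δ ^ 2 / 2 := by
      rw [intervalIntegral.integral_const_mul, integral_id]
      ring
    rw [hval] at hint
    have hfδ : 0 ≤ f δ := hnn δ ⟨hδ0.le, hδ1.le⟩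
    have hkey : m ^ p * δ ^ 2 ≤ 2 * M := by linarith
    have hmp : m ^ p = M ^ p * (1 - δ) ^ p :=
      mul_rpow hM0.le (by linarith)
    rw [rpow_sub hM0, rpow_one, div_mul_eq_mul_div, div_le_div_iff₀ hM0 (by positivity)]
    calc M ^ p * (1 - δ) ^ p * δ ^ 2 = m ^ p * δ ^ 2 := by rw [hmp]
    _ ≤ 2 * M := hkey

/-- The maximum `‖u_p‖_∞ = u_p(0)` converges to `1` as `p → +∞`. -/
theorem sup_norm_tendsto_one
    (u : ℝ → ℝ → ℝ) (hu : ∀ p : ℝ, 1 < p → IsLaneEmden p (u p)) :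
    Tendsto (fun p : ℝ => u p 0) atTop (𝓝 1) := by
  rw [tendsto_order]
  constructor
  · intro a ha
    filter_upwards [eventually_gt_atTop (1:ℝ)] with p hp
    obtain ⟨hM0, h2, -⟩ := laneEmden_key p hp (u p) (hu p hp)
    by_contra hle
    push_neg at hle
    have hM1 : u p 0 ≤ 1 := le_trans hle ha.le
    have : u p 0 ^ (p - 1) ≤ 1 := rpow_le_one hM0.le hM1 (by linarith)
    linarith
  · intro b hb
    set δ : ℝ := (b - 1) / (2 * b) with hδdef
    have hb0 : (0:ℝ) < b := by linarith
    have hδ0 : 0 < δ := div_pos (by linarith) (by linarith)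
    have hδ1 : δ < 1 := by
      rw [hδdef, div_lt_one (by linarith)]; linarith
    set c : ℝ := b * (1 - δ) with hcdef
    have hc1 : 1 < c := by
      have : c = (b + 1) / 2 := by
        rw [hcdef, hδdef]; field_simp; ring
      rw [this]; linarith
    have hc0 : (0:ℝ) < c := by linarith
    have htc : Tendsto (fun p : ℝ => c ^ p) atTop atTop := by
      have : (fun p : ℝ => c ^ p) = fun p => Real.exp (Real.log c * p) := by
        funext p; rw [rpow_def_of_pos hc0, mul_comm]
      rw [this]
      exact Real.tendsto_exp_atTop.comp
        (Tendsto.const_mul_atTop (Real.log_pos hc1) tendsto_id)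
    filter_upwards [htc.eventually_gt_atTop (2 * b / δ ^ 2),
      eventually_gt_atTop (1:ℝ)] with p hcp hp
    obtain ⟨hM0, -, hK⟩ := laneEmden_key p hp (u p) (hu p hp)
    have hKδ := hK δ hδ0 hδ1
    -- b ^ (p-1) * (1-δ)^p = c^p / b
    have hbp : b ^ (p - 1) * (1 - δ) ^ p = c ^ p / b := by
      rw [hcdef, mul_rpow hb0.le (by linarith : (0:ℝ) ≤ 1 - δ),
        rpow_sub hb0, rpow_one]
      ring
    have hgt : 2 / δ ^ 2 < b ^ (p - 1) * (1 - δ) ^ p := by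
      rw [hbp, lt_div_iff₀ hb0]
      calc 2 / δ ^ 2 * b = 2 * b / δ ^ 2 := by ring
      _ < c ^ p := hcp
    have hlt : u p 0 ^ (p - 1) * (1 - δ) ^ p < b ^ (p - 1) * (1 - δ) ^ p :=
      lt_of_le_of_lt hKδ hgt
    have hMp : u p 0 ^ (p - 1) < b ^ (p - 1) :=
      lt_of_mul_lt_mul_right hlt (rpow_nonneg (by linarith) p)
    by_contra hle
    push_neg at hle
    exact absurd (rpow_le_rpow hb0.le hle (by linarith : (0:ℝ) ≤ p - 1)) (not_le.mpr hMp)
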